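/- arXiv:2108.03459 — 2 statements merged into one kernel-verified Lean document; each statement's English description precedes it below -/
import Mathlib

section
/- Let $\Theta : [0,\Delta t] \times \Omega \to \mathbb{R}^M$ be smooth in its first argument, with $\Omega \subset \mathbb{R}^K$ compact, and suppose $\Theta(\tau,\chi) = O(\tau^p)$ uniformly in $\chi$ (i.e. $\partial_1^j \Theta(0,\chi) = 0$ for $j = 0,\dots,p-1$). Define $\mathcal{L}(\Delta t,\chi) = \int_0^{\Delta t} \Theta(\tau,\chi)\,d\tau$ and $L(\Delta t,\chi) = \frac{\Delta t}{p+1}\Theta(\Delta t,\chi)$. Then there exists a constant $C$, independent of $\chi$, such that $\|L(\Delta t,\chi) - \mathcal{L}(\Delta t,\chi)\| \le C \Delta t^{p+2}$ for all $\chi \in \Omega$. Moreover one may take $C = \frac{2p+3}{(p+2)!(p+1)} \widetilde{C}$ where $\widetilde{C} = \max_{(\xi,\chi) \in [0,\Delta t]\times \Omega} \|\partial_1^{p+1}\Theta(\xi,\chi)\|$. -/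
/-!
Expanding `Θ(·, χ)` around `0`, the vanishing of its first `p` derivatives leaves the single
Taylor term `τ^p / p! • ∂₁ᵖΘ(0, χ)`, which the rule `Δt / (p + 1) • Θ(Δt, χ)` integrates
exactly.
The error is therefore that of the rule applied to the Taylor remainder `R`, and the sharp
Lagrange bound `‖R τ‖ ≤ C̃ τ^(p+1) / (p+1)!` gives
`Δt/(p+1) · C̃ Δt^(p+1)/(p+1)! + C̃ Δt^(p+2)/(p+2)! = (2p+3)/((p+2)! (p+1)) · C̃ Δt^(p+2)`.
-/

open Set Nat MeasureTheory

theorem norm_sub_taylorWithinEval_le {E : Type*} [NormedAddCommGroup E] [NormedSpace ℝ E]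
    {f : ℝ → E} {a b C x : ℝ} {n : ℕ} (hab : a < b)
    (hf : ContDiffOn ℝ (n + 1) f (Icc a b)) (hx : x ∈ Icc a b)
    (hC : ∀ y ∈ Icc a b, ‖iteratedDerivWithin (n + 1) f (Icc a b) y‖ ≤ C) :
    ‖f x - taylorWithinEval f n (Icc a b) a x‖ ≤ C * (x - a) ^ (n + 1) / (n + 1)! := by
  have hf' : DifferentiableOn ℝ (iteratedDerivWithin n f (Icc a b)) (Icc a b) :=
    hf.differentiableOn_iteratedDerivWithin (mod_cast n.lt_succ_self) (uniqueDiffOn_Icc hab)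
  have hsub : Icc a x ⊆ Icc a b := Icc_subset_Icc_right hx.2
  -- Comparison with `B`: as a function of its base point `t`, the Taylor polynomial at `x` has
  -- derivative `(x - t)^n / n! • f⁽ⁿ⁺¹⁾(t)`, whose norm is at most `B' t`.
  set B : ℝ → ℝ := fun t => C * ((x - a) ^ (n + 1) - (x - t) ^ (n + 1)) / (n + 1)!
  have hB : ∀ t, HasDerivAt B ((n ! : ℝ)⁻¹ * (x - t) ^ n * C) t := by
    intro t
    refine (((monomial_has_deriv_aux t x n).const_sub ((x - a) ^ (n + 1))).const_mul C).div_const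
      ((n + 1)! : ℝ) |>.congr_deriv ?_
    rw [Nat.factorial_succ]
    push_cast
    field_simp
  have hcont : ContinuousOn (fun t => taylorWithinEval f n (Icc a b) t x) (Icc a x) :=
    (continuousOn_taylorWithinEval (uniqueDiffOn_Icc hab) hf.of_succ).mono hsub
  have hderiv : ∀ t ∈ Ico a x, HasDerivWithinAt (fun t => taylorWithinEval f n (Icc a b) t x)
      (((n ! : ℝ)⁻¹ * (x - t) ^ n) • iteratedDerivWithin (n + 1) f (Icc a b) t) (Ici t) t :=
    fun t ht => (hasDerivWithinAt_taylorWithinEval_at_Icc x hab (hsub (Ico_subset_Icc_self ht))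
      hf.of_succ hf').mono_of_mem_nhdsWithin
        (Filter.mem_of_superset (Icc_mem_nhdsGE_of_mem ht) hsub)
  have hbound : ∀ t ∈ Ico a x,
      ‖((n ! : ℝ)⁻¹ * (x - t) ^ n) • iteratedDerivWithin (n + 1) f (Icc a b) t‖ ≤
        (n ! : ℝ)⁻¹ * (x - t) ^ n * C := by
    intro t ht
    have hxt : 0 ≤ x - t := sub_nonneg.2 ht.2.le
    rw [norm_smul, Real.norm_eq_abs, abs_of_nonneg (by positivity)]
    exact mul_le_mul_of_nonneg_left (hC t (hsub (Ico_subset_Icc_self ht))) (by positivity)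
  simpa [B] using image_norm_le_of_norm_deriv_right_le_deriv_boundary
    (hcont.sub continuousOn_const) (fun t ht => (hderiv t ht).sub_const _) (by simp [B]) hB
    hbound (right_mem_Icc.2 hx.1)

theorem taylorWithinEval_eq_of_iteratedDerivWithin_eq_zero {E : Type*} [NormedAddCommGroup E]
    [NormedSpace ℝ E] {f : ℝ → E} {n : ℕ} {s : Set ℝ} {x₀ : ℝ}
    (h : ∀ k < n, iteratedDerivWithin k f s x₀ = 0) (x : ℝ) :
    taylorWithinEval f n s x₀ x =
      ((n ! : ℝ)⁻¹ * (x - x₀) ^ n) • iteratedDerivWithin n f s x₀ := by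
  rw [taylor_within_apply, Finset.sum_range_succ, Finset.sum_eq_zero, zero_add]
  intro k hk
  rw [h k (Finset.mem_range.1 hk), smul_zero]

section EndpointRule

variable {E : Type*} [NormedAddCommGroup E] [NormedSpace ℝ E]

/-- `L(b) - ℒ(b)` of the paper, for the rule `b / (n + 1) • g b`, which is exact on `τ ^ n`. -/
noncomputable def endpointRuleError (n : ℕ) (b : ℝ) (g : ℝ → E) : E :=
  (b / (n + 1)) • g b - ∫ τ in (0 : ℝ)..b, g τ

theorem endpointRuleError_sub {n : ℕ} {b : ℝ} {f g : ℝ → E}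
    (hf : IntervalIntegrable f volume 0 b) (hg : IntervalIntegrable g volume 0 b) :
    endpointRuleError n b (fun τ => f τ - g τ) =
      endpointRuleError n b f - endpointRuleError n b g := by
  simp only [endpointRuleError, intervalIntegral.integral_sub hf hg, smul_sub]
  abel

theorem endpointRuleError_monomial [CompleteSpace E] (n : ℕ) (b c : ℝ) (d : E) :
    endpointRuleError n b (fun τ => (c * τ ^ n) • d) = 0 := by
  rw [endpointRuleError, intervalIntegral.integral_smul_const, intervalIntegral.integral_const_mul,
    integral_pow, sub_eq_zero, smul_smul, zero_pow n.succ_ne_zero]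
  congr 1
  field_simp
  ring

theorem norm_endpointRuleError_le {n : ℕ} {b K : ℝ} {g : ℝ → E} (hb : 0 ≤ b)
    (hg : IntervalIntegrable g volume 0 b)
    (hK : ∀ τ ∈ Icc 0 b, ‖g τ‖ ≤ K * τ ^ (n + 1) / (n + 1)!) :
    ‖endpointRuleError n b g‖ ≤ (2 * n + 3) / ((n + 2)! * (n + 1)) * K * b ^ (n + 2) := by
  have hend : ‖(b / (n + 1)) • g b‖ ≤ b / (n + 1) * (K * b ^ (n + 1) / (n + 1)!) := by
    rw [norm_smul, Real.norm_eq_abs, abs_of_nonneg (by positivity)]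
    exact mul_le_mul_of_nonneg_left (hK b (right_mem_Icc.2 hb)) (by positivity)
  have hint : ‖∫ τ in (0 : ℝ)..b, g τ‖ ≤ ∫ τ in (0 : ℝ)..b, K * τ ^ (n + 1) / (n + 1)! :=
    (intervalIntegral.norm_integral_le_integral_norm hb).trans <|
      intervalIntegral.integral_mono_on hb hg.norm
        (Continuous.intervalIntegrable (by fun_prop) _ _) hK
  have hmoment : ∫ τ in (0 : ℝ)..b, K * τ ^ (n + 1) / (n + 1)! =
      K / (n + 1)! * (b ^ (n + 2) / (n + 2)) := by
    simp_rw [mul_div_right_comm K, intervalIntegral.integral_const_mul, integral_pow]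
    push_cast
    ring
  calc ‖endpointRuleError n b g‖
      ≤ ‖(b / (n + 1)) • g b‖ + ‖∫ τ in (0 : ℝ)..b, g τ‖ := norm_sub_le _ _
    _ ≤ b / (n + 1) * (K * b ^ (n + 1) / (n + 1)!) +
          K / (n + 1)! * (b ^ (n + 2) / (n + 2)) :=
        add_le_add hend (hint.trans_eq hmoment)
    _ = (2 * n + 3) / ((n + 2)! * (n + 1)) * K * b ^ (n + 2) := by
        rw [Nat.factorial_succ (n + 1)]
        push_cast
        field_simp
        ring

end EndpointRule

theorem stmt_0 (K M p : ℕ) (Δt : ℝ) (hΔt : 0 < Δt)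
    (Ω : Set (EuclideanSpace ℝ (Fin K))) (hΩ : IsCompact Ω)
    (Θ : ℝ → EuclideanSpace ℝ (Fin K) → EuclideanSpace ℝ (Fin M))
    (hsmooth : ∀ χ ∈ Ω, ContDiffOn ℝ (p + 1) (fun τ => Θ τ χ) (Set.Icc 0 Δt))
    (hcont : ContinuousOn
      (fun q : ℝ × EuclideanSpace ℝ (Fin K) =>
        iteratedDerivWithin (p + 1) (fun τ => Θ τ q.2) (Set.Icc 0 Δt) q.1)
      (Set.Icc 0 Δt ×ˢ Ω))
    (hvanish : ∀ χ ∈ Ω, ∀ j < p,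
      iteratedDerivWithin j (fun τ => Θ τ χ) (Set.Icc 0 Δt) 0 = 0)
    (Ctil : ℝ)
    (hCtil : Ctil = sSup ((fun q : ℝ × EuclideanSpace ℝ (Fin K) =>
      ‖iteratedDerivWithin (p + 1) (fun τ => Θ τ q.2) (Set.Icc 0 Δt) q.1‖) ''
      (Set.Icc 0 Δt ×ˢ Ω))) :
    ∀ χ ∈ Ω,
      ‖(Δt / (p + 1)) • Θ Δt χ - ∫ τ in (0 : ℝ)..Δt, Θ τ χ‖ ≤
        (2 * p + 3) / (Nat.factorial (p + 2) * (p + 1)) * Ctil * Δt ^ (p + 2) := by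
  intro χ hχ
  set f := fun τ => Θ τ χ
  have hC : ∀ y ∈ Icc 0 Δt, ‖iteratedDerivWithin (p + 1) f (Icc 0 Δt) y‖ ≤ Ctil := fun y hy =>
    hCtil ▸ le_csSup ((isCompact_Icc.prod hΩ).image_of_continuousOn hcont.norm).bddAbove
      ⟨(y, χ), ⟨hy, hχ⟩, rfl⟩
  set P := fun τ : ℝ => ((p ! : ℝ)⁻¹ * τ ^ p) • iteratedDerivWithin p f (Icc 0 Δt) 0
  have hremainder : ∀ τ ∈ Icc 0 Δt, ‖f τ - P τ‖ ≤ Ctil * τ ^ (p + 1) / (p + 1)! := by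
    intro τ hτ
    simpa [taylorWithinEval_eq_of_iteratedDerivWithin_eq_zero (hvanish χ hχ)] using
      norm_sub_taylorWithinEval_le hΔt (hsmooth χ hχ) hτ hC
  have hfint : IntervalIntegrable f volume 0 Δt :=
    ((hsmooth χ hχ).continuousOn.mono (uIcc_of_le hΔt.le).subset).intervalIntegrable
  have hPint : IntervalIntegrable P volume 0 Δt :=
    Continuous.intervalIntegrable (by fun_prop) _ _
  have hsplit : endpointRuleError p Δt f = endpointRuleError p Δt (fun τ => f τ - P τ) := by
    rw [endpointRuleError_sub hfint hPint, endpointRuleError_monomial, sub_zero]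
  change ‖endpointRuleError p Δt f‖ ≤ _
  rw [hsplit]
  exact norm_endpointRuleError_le hΔt.le (hfint.sub hPint) hremainder
end

section
/- Let $G : \mathbb{R}^M \to \mathbb{R}^M$ and $R : [0,T] \times \mathbb{R}^M \to \mathbb{R}^M$ be smooth, and let $\mathcal{E}_G(t, w)$ denote the flow of $\dot{v} = G(v)$, $v(0) = w$, and $\mathcal{E}_H(t, u_0)$ the solution of $\dot{u}(t) = G(u(t)) + R(t, u(t))$, $u(0) = u_0$, both assumed to exist on $[0,T]$. Then for all $t \in [0,T]$: $\mathcal{E}_H(t, u_0) = \mathcal{E}_G(t, u_0) + \int_0^t \partial_2 \mathcal{E}_G\big(t - \tau, \mathcal{E}_H(\tau, u_0)\big) \cdot R\big(\tau, \mathcal{E}_H(\tau, u_0)\big)\, d\tau$, where $\partial_2 \mathcal{E}_G$ is the derivative of the flow with respect to the initial value. -/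
open Set

lemma ode_uniq {E : Type*} [NormedAddCommGroup E] [NormedSpace ℝ E] [FiniteDimensional ℝ E]
    (G : E → E) (hG : ContDiff ℝ (⊤ : ℕ∞) G) {a b : ℝ} {f g : ℝ → E}
    (hf : ∀ t ∈ Icc a b, HasDerivAt f (G (f t)) t)
    (hg : ∀ t ∈ Icc a b, HasDerivAt g (G (g t)) t)
    (heq : f a = g a) : EqOn f g (Icc a b) := by
  rcases lt_or_ge b a with hab | hab
  · intro t ht; exact absurd ht (by simp [Icc_eq_empty_of_lt hab])
  have hfc : ContinuousOn f (Icc a b) := fun t ht => ((hf t ht).continuousAt).continuousWithinAt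
  have hgc : ContinuousOn g (Icc a b) := fun t ht => ((hg t ht).continuousAt).continuousWithinAt
  obtain ⟨r, hr⟩ : ∃ r, (f '' Icc a b ∪ g '' Icc a b) ⊆ Metric.closedBall 0 r := by
    have hb : Bornology.IsBounded (f '' Icc a b ∪ g '' Icc a b) :=
      ((isCompact_Icc.image_of_continuousOn hfc).union
        (isCompact_Icc.image_of_continuousOn hgc)).isBounded
    exact hb.subset_closedBall 0
  obtain ⟨C, hC⟩ : ∃ C, ∀ x ∈ Metric.closedBall (0:E) r, ‖fderiv ℝ G x‖ ≤ C :=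
    (isCompact_closedBall (0:E) r).exists_bound_of_continuousOn
      ((hG.continuous_fderiv (by simp)).continuousOn)
  have hlip : LipschitzOnWith (Real.toNNReal C) G (Metric.closedBall 0 r) := by
    apply (convex_closedBall _ _).lipschitzOnWith_of_nnnorm_fderiv_le
      (fun x _ => (hG.differentiable (by simp)).differentiableAt)
      (fun x hx => ?_)
    rw [← NNReal.coe_le_coe, coe_nnnorm, Real.coe_toNNReal']
    exact (hC x hx).trans (le_max_left _ _)
  exact ODE_solution_unique_of_mem_Icc_right (fun _ _ => hlip) hfc
    (fun t ht => (hf t (Ico_subset_Icc_self ht)).hasDerivWithinAt)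
    (fun t ht => hr (Or.inl ⟨t, Ico_subset_Icc_self ht, rfl⟩))
    hgc
    (fun t ht => (hg t (Ico_subset_Icc_self ht)).hasDerivWithinAt)
    (fun t ht => hr (Or.inr ⟨t, Ico_subset_Icc_self ht, rfl⟩))
    heq

theorem stmt_19 (M : ℕ) (T : ℝ) (hT : 0 < T)
    (G : EuclideanSpace ℝ (Fin M) → EuclideanSpace ℝ (Fin M))
    (R : ℝ → EuclideanSpace ℝ (Fin M) → EuclideanSpace ℝ (Fin M))
    (hG : ContDiff ℝ (⊤ : ℕ∞) G)
    (hR : ContDiff ℝ (⊤ : ℕ∞) (fun q : ℝ × EuclideanSpace ℝ (Fin M) => R q.1 q.2))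
    (EG : ℝ → EuclideanSpace ℝ (Fin M) → EuclideanSpace ℝ (Fin M))
    (hEG0 : ∀ w, EG 0 w = w)
    (hEGflow : ∀ w, ∀ t ∈ Set.Icc (0 : ℝ) T, HasDerivAt (fun s => EG s w) (G (EG t w)) t)
    (hEGsmooth : ContDiff ℝ (⊤ : ℕ∞) (fun q : ℝ × EuclideanSpace ℝ (Fin M) => EG q.1 q.2))
    (u₀ : EuclideanSpace ℝ (Fin M))
    (uH : ℝ → EuclideanSpace ℝ (Fin M)) (huH0 : uH 0 = u₀)
    (huH : ∀ t ∈ Set.Icc (0 : ℝ) T, HasDerivAt uH (G (uH t) + R t (uH t)) t) :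
    ∀ t ∈ Set.Icc (0 : ℝ) T,
      uH t = EG t u₀ +
        ∫ τ in (0 : ℝ)..t, fderiv ℝ (EG (t - τ)) (uH τ) (R τ (uH τ)) := by
  set F : ℝ × EuclideanSpace ℝ (Fin M) → EuclideanSpace ℝ (Fin M) := fun q => EG q.1 q.2 with hF
  have hFdiff : Differentiable ℝ F := hEGsmooth.differentiable (by simp)
  have hFderivCont : Continuous (fun q => fderiv ℝ F q) := hEGsmooth.continuous_fderiv (by simp)
  -- partial derivative in second variable
  have hD2 : ∀ (a : ℝ) (b : EuclideanSpace ℝ (Fin M)), HasFDerivAt (EG a)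
      ((fderiv ℝ F (a, b)).comp (ContinuousLinearMap.inr ℝ ℝ (EuclideanSpace ℝ (Fin M)))) b := by
    intro a b
    have h1 : HasFDerivAt (fun w : EuclideanSpace ℝ (Fin M) => (a, w)) (ContinuousLinearMap.inr ℝ ℝ (EuclideanSpace ℝ (Fin M))) b :=
      (hasFDerivAt_const a b).prodMk (hasFDerivAt_id b)
    exact ((hFdiff (a, b)).hasFDerivAt).comp b h1
  have hpart2 : ∀ (a : ℝ) (b : EuclideanSpace ℝ (Fin M)) (v : EuclideanSpace ℝ (Fin M)),
      fderiv ℝ (EG a) b v = fderiv ℝ F (a, b) (0, v) := by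
    intro a b v
    rw [(hD2 a b).fderiv]; rfl
  have hpart1 : ∀ a ∈ Icc (0:ℝ) T, ∀ b : EuclideanSpace ℝ (Fin M),
      fderiv ℝ F (a, b) (1, 0) = G (EG a b) := by
    intro a ha b
    have h1 : HasDerivAt (fun s : ℝ => (s, b)) ((1:ℝ), (0:EuclideanSpace ℝ (Fin M))) a :=
      (hasDerivAt_id a).prodMk (hasDerivAt_const a b)
    have h2 : HasDerivAt (fun s => EG s b) (fderiv ℝ F (a, b) (1, 0)) a :=
      by have h := ((hFdiff (a, b)).hasFDerivAt).comp_hasDerivAt a h1; exact h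
    exact h2.unique (hEGflow b a ha)
  have hBfull : ∀ a ∈ Icc (0:ℝ) T, ∀ (b : EuclideanSpace ℝ (Fin M)) (x : ℝ) (v : EuclideanSpace ℝ (Fin M)),
      fderiv ℝ F (a, b) (x, v) = x • G (EG a b) + fderiv ℝ (EG a) b v := by
    intro a ha b x v
    have hxv : ((x, v) : ℝ × EuclideanSpace ℝ (Fin M)) = x • ((1:ℝ), (0:EuclideanSpace ℝ (Fin M))) + ((0:ℝ), v) := by
      simp [Prod.ext_iff]
    rw [hxv, map_add, map_smul, hpart1 a ha b, hpart2]
  -- semigroup property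
  have hsemi : ∀ ε ∈ Icc (0:ℝ) T, ∀ s ∈ Icc (0:ℝ) (T - ε), ∀ w,
      EG (s + ε) w = EG s (EG ε w) := by
    intro ε hε s hs w
    have := ode_uniq G hG (a := 0) (b := T - ε)
      (f := fun s => EG (s + ε) w) (g := fun s => EG s (EG ε w))
      (fun τ hτ => by
        have h0 : HasDerivAt (fun u => EG u w) (G (EG (τ + ε) w)) (τ + ε) :=
          hEGflow w (τ + ε) ⟨by linarith [hτ.1, hε.1], by linarith [hτ.2]⟩
        have h1 : HasDerivAt (fun τ : ℝ => τ + ε) 1 τ := (hasDerivAt_id τ).add_const ε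
        simpa [Function.comp_def] using h0.scomp τ h1)
      (fun τ hτ => by simpa using hEGflow (EG ε w) τ ⟨hτ.1, by linarith [hτ.2, hε.1]⟩)
      (by simp [hEG0])
    exact this hs
  -- key identity: ∂₂EG(s,w)(G w) = G (EG s w)
  have hkeyIco : ∀ s ∈ Ico (0:ℝ) T, ∀ w : EuclideanSpace ℝ (Fin M),
      fderiv ℝ (EG s) w (G w) = G (EG s w) := by
    intro s hs w
    have hTs : 0 < T - s := by linarith [hs.2]
    have hL : HasDerivWithinAt (fun ε => EG (s + ε) w) (G (EG s w)) (Ici (0:ℝ)) 0 := by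
      have h0 : HasDerivAt (fun u => EG u w) (G (EG s w)) (s + 0) := by
        simpa using hEGflow w s ⟨hs.1, hs.2.le⟩
      have h1 : HasDerivAt (fun ε : ℝ => s + ε) 1 0 := (hasDerivAt_id 0).const_add s
      have := h0.scomp 0 h1
      simpa [Function.comp_def] using this.hasDerivWithinAt
    have hR0 : HasDerivAt (fun ε => EG s (EG ε w)) (fderiv ℝ (EG s) w (G w)) 0 := by
      have hd : HasDerivAt (fun ε => EG ε w) (G (EG 0 w)) 0 := hEGflow w 0 ⟨le_rfl, hT.le⟩
      have hc := (hD2 s (EG 0 w)).comp_hasDerivAt 0 hd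
      rw [hEG0 w] at hc
      rw [hpart2 s w (G w)]
      exact hc
    have heqn : (fun ε => EG s (EG ε w)) =ᶠ[nhdsWithin 0 (Ici (0:ℝ))] fun ε => EG (s + ε) w := by
      filter_upwards [Icc_mem_nhdsGE_of_mem (Set.left_mem_Ico.mpr hTs)] with ε hε
      exact (hsemi ε ⟨hε.1, by linarith [hε.2, hs.1]⟩ s ⟨hs.1, by linarith [hε.2]⟩ w).symm
    have hRd : HasDerivWithinAt (fun ε => EG (s + ε) w) (fderiv ℝ (EG s) w (G w))
        (Ici (0:ℝ)) 0 := by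
      refine hR0.hasDerivWithinAt.congr_of_eventuallyEq heqn.symm ?_
      simp [hEG0]
    have h1 := hL.derivWithin (uniqueDiffOn_Ici 0 0 Set.self_mem_Ici)
    have h2 := hRd.derivWithin (uniqueDiffOn_Ici 0 0 Set.self_mem_Ici)
    rw [← h1, ← h2]
  have hkey : ∀ s ∈ Icc (0:ℝ) T, ∀ w : EuclideanSpace ℝ (Fin M),
      fderiv ℝ (EG s) w (G w) = G (EG s w) := by
    intro s hs w
    rcases lt_or_eq_of_le hs.2 with hsT | hsT
    · exact hkeyIco s ⟨hs.1, hsT⟩ w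
    · have hcont1 : Continuous (fun s : ℝ => fderiv ℝ (EG s) w (G w)) := by
        have : (fun s : ℝ => fderiv ℝ (EG s) w (G w))
            = fun s : ℝ => fderiv ℝ F (s, w) (0, G w) := funext fun s => hpart2 s w (G w)
        rw [this]
        exact (hFderivCont.comp (continuous_id.prodMk continuous_const)).clm_apply
          continuous_const
      have hcont2 : Continuous (fun s : ℝ => G (EG s w)) :=
        hG.continuous.comp (hEGsmooth.continuous.comp (continuous_id.prodMk continuous_const))
      have hclos : EqOn (fun s : ℝ => fderiv ℝ (EG s) w (G w)) (fun s : ℝ => G (EG s w))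
          (closure (Ico 0 T)) :=
        Set.EqOn.closure (fun x hx => hkeyIco x hx w) hcont1 hcont2
      have : s ∈ closure (Ico (0:ℝ) T) := by
        rw [closure_Ico hT.ne]; exact hs
      exact hclos this
  -- main argument
  intro t ht
  set φ : ℝ → EuclideanSpace ℝ (Fin M) := fun τ => EG (t - τ) (uH τ) with hφdef
  have hφ : ∀ τ ∈ Icc (0:ℝ) t, HasDerivAt φ
      (fderiv ℝ (EG (t - τ)) (uH τ) (R τ (uH τ))) τ := by
    intro τ hτ
    have hτT : τ ∈ Icc (0:ℝ) T := ⟨hτ.1, hτ.2.trans ht.2⟩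
    have hts : t - τ ∈ Icc (0:ℝ) T := ⟨by linarith [hτ.2], by linarith [hτ.1, ht.2]⟩
    have hγ : HasDerivAt (fun τ : ℝ => ((t - τ : ℝ), uH τ))
        ((-1 : ℝ), G (uH τ) + R τ (uH τ)) τ := by
      refine HasDerivAt.prodMk ?_ (huH τ hτT)
      simpa [Pi.sub_def] using (hasDerivAt_const τ t).sub (hasDerivAt_id τ)
    have hcomp : HasDerivAt φ
        (fderiv ℝ F (t - τ, uH τ) ((-1:ℝ), G (uH τ) + R τ (uH τ))) τ :=
      by have h := ((hFdiff _).hasFDerivAt).comp_hasDerivAt τ hγ; exact h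
    have hval : fderiv ℝ F (t - τ, uH τ) ((-1:ℝ), G (uH τ) + R τ (uH τ))
        = fderiv ℝ (EG (t - τ)) (uH τ) (R τ (uH τ)) := by
      rw [hBfull (t - τ) hts (uH τ) (-1) (G (uH τ) + R τ (uH τ)), map_add,
        hkey (t - τ) hts (uH τ)]
      simp
    rwa [hval] at hcomp
  have huHc : ContinuousOn uH (Icc (0:ℝ) t) := fun τ hτ =>
    ((huH τ ⟨hτ.1, hτ.2.trans ht.2⟩).continuousAt).continuousWithinAt
  have hcontφ' : ContinuousOn (fun τ => fderiv ℝ (EG (t - τ)) (uH τ) (R τ (uH τ)))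
      (Icc (0:ℝ) t) := by
    have heqfun : (fun τ => fderiv ℝ (EG (t - τ)) (uH τ) (R τ (uH τ)))
        = fun τ => fderiv ℝ F (t - τ, uH τ) ((0:ℝ), R τ (uH τ)) :=
      funext fun τ => hpart2 (t - τ) (uH τ) (R τ (uH τ))
    rw [heqfun]
    have h1 : ContinuousOn (fun τ : ℝ => fderiv ℝ F (t - τ, uH τ)) (Icc 0 t) :=
      hFderivCont.comp_continuousOn ((continuousOn_const.sub continuousOn_id).prodMk huHc)
    have h2 : ContinuousOn (fun τ : ℝ => (((0:ℝ), R τ (uH τ)) : ℝ × EuclideanSpace ℝ (Fin M))) (Icc 0 t) :=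
      continuousOn_const.prodMk
        (hR.continuous.comp_continuousOn (continuousOn_id.prodMk huHc))
    exact h1.clm_apply h2
  have hint : IntervalIntegrable (fun τ => fderiv ℝ (EG (t - τ)) (uH τ) (R τ (uH τ)))
      MeasureTheory.volume 0 t := by
    apply ContinuousOn.intervalIntegrable
    rwa [Set.uIcc_of_le ht.1]
  have hFTC := intervalIntegral.integral_eq_sub_of_hasDerivAt
    (f := φ) (fun τ hτ => hφ τ (by rwa [Set.uIcc_of_le ht.1] at hτ)) hint
  have hφt : φ t = uH t := by simp [hφdef, hEG0]
  have hφ0 : φ 0 = EG t u₀ := by simp [hφdef, huH0]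
  rw [hφt, hφ0] at hFTC
  rw [hFTC]; abel
end
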